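/- For every finite undirected graph G with colouring c, γ(G) ≤ loc(G,c) ≤ α(G), where γ(G) is the number of connected components of G and α(G) is the independence number of G. -/

import Mathlib

/-- Number of connected components of the subgraph of `G` induced by `S`. -/
noncomputable def numComponents {V : Type*} (G : SimpleGraph V) (S : Set V) : ℕ :=
  Nat.card (G.induce S).ConnectedComponent

/-- `e` is a marking sequence for the colouring `c`: an enumeration (without
repetition) of exactly the colours occurring. -/
def IsMarkingSeq {V : Type*} (c : V → ℕ) (e : List ℕ) : Prop :=
  e.Nodup ∧ ∀ x, x ∈ e ↔ ∃ v, c v = x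

/-- Locality of `G` coloured by `c` w.r.t. the marking sequence `e`:
the maximal number of connected components over all marking stages. -/
noncomputable def locSeq {V : Type*} (G : SimpleGraph V) (c : V → ℕ) (e : List ℕ) : ℕ :=
  ((List.range e.length).map fun i =>
    numComponents G {v | c v ∈ e.take (i + 1)}).foldr max 0

/-- Locality of `G` w.r.t. the colouring `c`. -/
noncomputable def loc {V : Type*} (G : SimpleGraph V) (c : V → ℕ) : ℕ :=
  sInf {k | ∃ e, IsMarkingSeq c e ∧ locSeq G c e = k}

/-- Number of connected components of `G`. -/
noncomputable def gamma {V : Type*} (G : SimpleGraph V) : ℕ :=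
  Nat.card G.ConnectedComponent

lemma le_foldr_max {x : ℕ} {l : List ℕ} (hx : x ∈ l) : x ≤ l.foldr max 0 := by
  induction l with
  | nil => simp at hx
  | cons a t ih =>
    rcases List.mem_cons.mp hx with h | h
    · subst h; exact le_max_left _ _
    · exact (ih h).trans (le_max_right _ _)

lemma foldr_max_le {B : ℕ} {l : List ℕ} (h : ∀ x ∈ l, x ≤ B) : l.foldr max 0 ≤ B := by
  induction l with
  | nil => simp
  | cons a t ih =>
    simp only [List.foldr_cons]
    exact max_le (h a (List.mem_cons_self (a := a) (l := t))) (ih fun x hx => h x (List.mem_cons_of_mem _ hx))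

/-- Any number of components of an induced subgraph is realised by an independent set. -/
lemma numComponents_mem {V : Type*} [Fintype V] (G : SimpleGraph V) (S : Set V) :
    numComponents G S ∈ {k | ∃ s : Finset V,
      (↑s : Set V).Pairwise (fun u v => ¬ G.Adj u v) ∧ s.card = k} := by
  classical
  have : Finite (G.induce S).ConnectedComponent := Quot.finite _
  have : Fintype (G.induce S).ConnectedComponent := Fintype.ofFinite _
  set f : (G.induce S).ConnectedComponent → V := fun C => (C.out : V) with hf
  have hout : ∀ C : (G.induce S).ConnectedComponent,
      Quot.mk (G.induce S).Reachable (Quot.out C) = C := fun C => Quot.out_eq C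
  have hinj : Function.Injective f := by
    intro C D h
    have h2 : Quot.out C = Quot.out D := Subtype.ext h
    rw [← hout C, ← hout D, h2]
  refine ⟨Finset.univ.image f, ?_, ?_⟩
  · intro u hu v hv huv hadj
    simp only [Finset.coe_image, Finset.coe_univ, Set.image_univ, Set.mem_range] at hu hv
    obtain ⟨C, rfl⟩ := hu
    obtain ⟨D, rfl⟩ := hv
    have hadj' : (G.induce S).Adj (Quot.out C) (Quot.out D) := hadj
    have hCD : C = D := by
      rw [← hout C, ← hout D]
      exact Quot.sound hadj'.reachable
    exact huv (congrArg f hCD)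
  · rw [Finset.card_image_of_injective _ hinj, Finset.card_univ, numComponents,
      Nat.card_eq_fintype_card]

theorem gamma_le_loc_le_indepNum {V : Type*} [Fintype V] (G : SimpleGraph V) (c : V → ℕ) :
    gamma G ≤ loc G c ∧
    loc G c ≤ sSup {k | ∃ s : Finset V,
      (↑s : Set V).Pairwise (fun u v => ¬ G.Adj u v) ∧ s.card = k} := by
  classical
  -- a canonical marking sequence exists
  have hrfin : (Set.range c).Finite := Set.finite_range c
  set e₀ : List ℕ := hrfin.toFinset.toList with he₀
  have hms : IsMarkingSeq c e₀ := by
    constructor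
    · exact Finset.nodup_toList _
    · intro x
      rw [he₀, Finset.mem_toList, Set.Finite.mem_toFinset, Set.mem_range]
  have hne : {k | ∃ e, IsMarkingSeq c e ∧ locSeq G c e = k}.Nonempty :=
    ⟨locSeq G c e₀, e₀, hms, rfl⟩
  constructor
  · -- gamma ≤ loc
    apply le_csInf hne
    rintro k ⟨e, ⟨hnd, hcol⟩, rfl⟩
    by_cases hV : Nonempty V
    · -- e is nonempty
      obtain ⟨v⟩ := hV
      have hv : c v ∈ e := (hcol (c v)).mpr ⟨v, rfl⟩
      have hlen : 0 < e.length := List.length_pos_iff.mpr (List.ne_nil_of_mem hv)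
      have hmem : numComponents G {v | c v ∈ e.take (e.length - 1 + 1)} ∈
          (List.range e.length).map fun i => numComponents G {v | c v ∈ e.take (i + 1)} :=
        List.mem_map.mpr ⟨e.length - 1, List.mem_range.mpr (Nat.sub_lt hlen one_pos), rfl⟩
      have hset : {v | c v ∈ e.take (e.length - 1 + 1)} = Set.univ := by
        ext u
        simp only [Set.mem_setOf_eq, Set.mem_univ, iff_true]
        rw [Nat.sub_add_cancel hlen, List.take_length]
        exact (hcol (c u)).mpr ⟨u, rfl⟩
      have hgamma : gamma G = numComponents G {v | c v ∈ e.take (e.length - 1 + 1)} := by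
        rw [hset, gamma, numComponents]
        exact (Nat.card_congr (SimpleGraph.induceUnivIso G).connectedComponentEquiv).symm
      rw [hgamma]
      exact le_foldr_max hmem
    · -- V empty, gamma = 0
      have : IsEmpty V := not_nonempty_iff.mp hV
      have hE : IsEmpty G.ConnectedComponent := by
        constructor
        intro C
        exact C.exists_rep.elim (fun v _ => isEmptyElim v)
      simp [gamma, Nat.card_of_isEmpty]
  · -- loc ≤ sSup
    have hbdd : BddAbove {k | ∃ s : Finset V,
        (↑s : Set V).Pairwise (fun u v => ¬ G.Adj u v) ∧ s.card = k} := by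
      rw [bddAbove_def]
      refine ⟨Fintype.card V, ?_⟩
      rintro k ⟨s, _, rfl⟩
      exact s.card_le_univ.trans_eq Finset.card_univ
    have hle : locSeq G c e₀ ≤ sSup {k | ∃ s : Finset V,
        (↑s : Set V).Pairwise (fun u v => ¬ G.Adj u v) ∧ s.card = k} := by
      apply foldr_max_le
      intro x hx
      obtain ⟨i, _, rfl⟩ := List.mem_map.mp hx
      exact le_csSup hbdd (numComponents_mem G _)
    have hmem₀ : locSeq G c e₀ ∈ {k | ∃ e, IsMarkingSeq c e ∧ locSeq G c e = k} :=
      ⟨e₀, hms, rfl⟩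
    exact (Nat.sInf_le hmem₀).trans hle
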